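/- Let Ω ⊆ 𝕆 be a domain and suppose (z, I₁) and (z, I₂) are CCL-equivalent in Ω̂ (i.e., τ_{I₁}(z) and τ_{I₂}(z) are CCL-equivalent in Ω). Then there exists δ > 0 such that (z', I₁) and (z', I₂) are CCL-equivalent for every complex number z' with |z' - z| < δ. -/

import Mathlib

noncomputable section

/-- The octonions, realized as the Cayley–Dickson double of the quaternions. -/
@[ext] structure Octonion : Type where
  a : Quaternion ℝ
  b : Quaternion ℝ

notation "𝕆" => Octonion

namespace Octonion

instance : Zero 𝕆 := ⟨⟨0, 0⟩⟩
instance : One 𝕆 := ⟨⟨1, 0⟩⟩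
instance : Add 𝕆 := ⟨fun x y => ⟨x.a + y.a, x.b + y.b⟩⟩
instance : Neg 𝕆 := ⟨fun x => ⟨-x.a, -x.b⟩⟩
instance : Sub 𝕆 := ⟨fun x y => ⟨x.a - y.a, x.b - y.b⟩⟩
/-- Cayley–Dickson multiplication. -/
instance : Mul 𝕆 := ⟨fun x y => ⟨x.a * y.a - star y.b * x.b, y.b * x.a + x.b * star y.a⟩⟩
instance : SMul ℝ 𝕆 := ⟨fun r x => ⟨r • x.a, r • x.b⟩⟩
instance : SMul ℕ 𝕆 := ⟨fun n x => ⟨n • x.a, n • x.b⟩⟩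
instance : SMul ℤ 𝕆 := ⟨fun n x => ⟨n • x.a, n • x.b⟩⟩

def toProd (x : 𝕆) : Quaternion ℝ × Quaternion ℝ := (x.a, x.b)

lemma toProd_injective : Function.Injective toProd := by
  intro x y h
  cases x; cases y
  simpa [toProd, Prod.ext_iff, Octonion.mk.injEq] using h

instance : AddCommGroup 𝕆 :=
  Function.Injective.addCommGroup toProd toProd_injective rfl (fun _ _ => rfl) (fun _ => rfl)
    (fun _ _ => rfl) (fun _ _ => rfl) (fun _ _ => rfl)

def toProdHom : 𝕆 →+ Quaternion ℝ × Quaternion ℝ :=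
  { toFun := toProd, map_zero' := rfl, map_add' := fun _ _ => rfl }

instance : Module ℝ 𝕆 :=
  Function.Injective.module ℝ toProdHom toProd_injective (fun _ _ => rfl)

def toProdLin : 𝕆 →ₗ[ℝ] Quaternion ℝ × Quaternion ℝ :=
  { toFun := toProd, map_add' := fun _ _ => rfl, map_smul' := fun _ _ => rfl }

instance : NormedAddCommGroup 𝕆 := NormedAddCommGroup.induced 𝕆 _ toProdHom toProd_injective
instance : NormedSpace ℝ 𝕆 := NormedSpace.induced ℝ 𝕆 _ toProdLin

/-- Octonionic conjugation. -/
def conj (x : 𝕆) : 𝕆 := ⟨star x.a, -x.b⟩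

/-- The real part of an octonion. -/
def re (x : 𝕆) : ℝ := x.a.re

/-- The imaginary part of an octonion. -/
def im (x : 𝕆) : 𝕆 := ⟨x.a.im, x.b⟩

/-- The squared (Euclidean) norm of an octonion. -/
def normSq (x : 𝕆) : ℝ := Quaternion.normSq x.a + Quaternion.normSq x.b

/-- The (Euclidean) norm of an octonion. -/
def onorm (x : 𝕆) : ℝ := Real.sqrt (normSq x)

instance : Inv 𝕆 := ⟨fun x => (normSq x)⁻¹ • conj x⟩

/-- The sphere of imaginary units of `𝕆`. -/
def sph : Set 𝕆 := {I | onorm I = 1 ∧ re I = 0}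

/-- `tau I (α + β i) = α + β I`. -/
def tau (I : 𝕆) (z : ℂ) : 𝕆 := z.re • (1 : 𝕆) + z.im • I

end Octonion

namespace Octonion

/-- `γ` and `Θ` define a circular lifting `t ↦ τ_{Θ t}(γ t)`: `γ` is a continuous path in `ℂ`
(the base) and `Θ` a continuous path in the sphere of imaginary units (the spherical
coordinate). -/
def IsCircularLifting (γ : unitInterval → ℂ) (Θ : unitInterval → 𝕆) : Prop :=
  Continuous γ ∧ Continuous Θ ∧ ∀ t, Θ t ∈ sph

/-- `x` and `x'` are CCL-connected in `Ω`: they are the terminal points of a pair of coupled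
circular liftings contained in `Ω` (common base, same initial spherical coordinate). -/
def CCLConnected (Ω : Set 𝕆) (x x' : 𝕆) : Prop :=
  ∃ γ Θ₁ Θ₂, IsCircularLifting γ Θ₁ ∧ IsCircularLifting γ Θ₂ ∧ Θ₁ 0 = Θ₂ 0 ∧
    (∀ t, tau (Θ₁ t) (γ t) ∈ Ω) ∧ (∀ t, tau (Θ₂ t) (γ t) ∈ Ω) ∧
    tau (Θ₁ 1) (γ 1) = x ∧ tau (Θ₂ 1) (γ 1) = x'

/-- CCL-equivalence in `Ω`: the equivalence closure of CCL-connectedness (finite chains). -/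
def CCLEquiv (Ω : Set 𝕆) : 𝕆 → 𝕆 → Prop := Relation.EqvGen (CCLConnected Ω)

end Octonion

namespace Octonion

/-- The disjoint union `Ω̂` of the complex slices of `Ω`, topologized as a disjoint union
(a set is open iff it is a union `⋃_I O^I × {I}` with each `O^I` open in `Ω^I`). -/
abbrev OHat (Ω : Set 𝕆) : Type := Σ I : sph, {z : ℂ // tau I.1 z ∈ Ω}

/-- The CCL equivalence relation on `Ω̂`: `(z,I) ≃ (z',I')` iff `z = z'` and `τ_I z`,
`τ_{I'} z'` are CCL-equivalent in `Ω`. -/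
def ohatSetoid (Ω : Set 𝕆) : Setoid (OHat Ω) where
  r p q := p.2.1 = q.2.1 ∧ CCLEquiv Ω (tau p.1.1 p.2.1) (tau q.1.1 q.2.1)
  iseqv := ⟨fun p => ⟨rfl, Relation.EqvGen.refl _⟩,
    fun h => ⟨h.1.symm, Relation.EqvGen.symm _ _ h.2⟩,
    fun h h' => ⟨h.1.trans h'.1, Relation.EqvGen.trans _ _ _ h.2 h'.2⟩⟩

/-- The quotient `D_Ω` of `Ω̂` by CCL equivalence, with the quotient topology. -/
abbrev DOmega (Ω : Set 𝕆) : Type := Quotient (ohatSetoid Ω)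

end Octonion

/-!
A pair of coupled circular liftings ending at `τ_I w` and `τ_J w` can be prolonged along any
path `σ` of the base starting at `w`, keeping the spherical coordinates constant, as long as
`τ_I ∘ σ` and `τ_J ∘ σ` stay in the open set `Ω`; this works for every `w'` near `w`. Such a pair
exists whenever `τ_I w` and `τ_J w` are CCL-connected: for real `w` join `I` to `J` inside the
path-connected sphere `𝕊` over the constant base `w`; for non-real `w` the endpoint `τ_A u = τ_I w`
forces `(u, A) = (w, I)` or `(w̄, -I)`, and in the second case one conjugates the whole pair.
Finally every point of a chain of CCL-connections starting at `τ_I w` lies on the sphere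
`{τ_K w : K ∈ 𝕊}`, so the chain can be followed link by link over the same base point `w`.
-/

open Topology

namespace Octonion

@[simp] lemma a_add (x y : 𝕆) : (x + y).a = x.a + y.a := rfl
@[simp] lemma b_add (x y : 𝕆) : (x + y).b = x.b + y.b := rfl
@[simp] lemma a_smul (r : ℝ) (x : 𝕆) : (r • x).a = r • x.a := rfl
@[simp] lemma b_smul (r : ℝ) (x : 𝕆) : (r • x).b = r • x.b := rfl
@[simp] lemma a_zero : (0 : 𝕆).a = 0 := rfl
@[simp] lemma b_zero : (0 : 𝕆).b = 0 := rfl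
@[simp] lemma a_one : (1 : 𝕆).a = 1 := rfl
@[simp] lemma b_one : (1 : 𝕆).b = 0 := rfl

lemma re_smul (r : ℝ) (x : 𝕆) : re (r • x) = r * re x := by
  simp [re]

lemma re_tau {I : 𝕆} (hI : re I = 0) (z : ℂ) : re (tau I z) = z.re := by
  simp_all [tau, re, Quaternion.re_one]

lemma im_tau {I : 𝕆} (hI : re I = 0) (z : ℂ) : im (tau I z) = z.im • I := by
  have hIa : I.a.im = I.a := Quaternion.ext _ _ hI.symm rfl rfl rfl
  ext1 <;> simp [tau, im, hIa, Quaternion.im_one]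

lemma normSq_smul (r : ℝ) (x : 𝕆) : normSq (r • x) = r ^ 2 * normSq x := by
  simp only [normSq, Quaternion.normSq_def', a_smul, b_smul, Quaternion.re_smul,
    Quaternion.imI_smul, Quaternion.imJ_smul, Quaternion.imK_smul, smul_eq_mul]
  ring

lemma onorm_smul (r : ℝ) (x : 𝕆) : onorm (r • x) = |r| * onorm x := by
  rw [onorm, normSq_smul, Real.sqrt_mul (sq_nonneg r), Real.sqrt_sq_eq_abs, onorm]

lemma onorm_eq_zero {x : 𝕆} : onorm x = 0 ↔ x = 0 := by
  rw [onorm, normSq,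
    Real.sqrt_eq_zero (add_nonneg Quaternion.normSq_nonneg Quaternion.normSq_nonneg),
    add_eq_zero_iff_of_nonneg Quaternion.normSq_nonneg Quaternion.normSq_nonneg,
    Quaternion.normSq_eq_zero, Quaternion.normSq_eq_zero, Octonion.ext_iff, a_zero, b_zero]

lemma continuous_onorm : Continuous onorm := by
  have hab : Continuous toProd := (show Isometry toProd from fun _ _ => rfl).continuous
  have ha : Continuous fun x : 𝕆 => x.a := continuous_fst.comp hab
  have hb : Continuous fun x : 𝕆 => x.b := continuous_snd.comp hab
  have : onorm = fun x => √(‖x.a‖ * ‖x.a‖ + ‖x.b‖ * ‖x.b‖) := by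
    ext x; simp only [onorm, normSq, Quaternion.normSq_eq_norm_mul_self]
  rw [this]
  fun_prop

lemma neg_mem_sph {I : 𝕆} (hI : I ∈ sph) : -I ∈ sph := by
  rw [← neg_one_smul ℝ I]
  exact ⟨by rw [onorm_smul, hI.1]; norm_num, by rw [re_smul, hI.2, mul_zero]⟩

lemma continuous_tau (I : 𝕆) : Continuous (tau I) := by
  unfold tau
  fun_prop

lemma tau_eq_tau_of_im_eq_zero {z : ℂ} (hz : z.im = 0) (I J : 𝕆) : tau I z = tau J z := by
  simp [tau, hz]

lemma tau_neg_conj (I : 𝕆) (z : ℂ) : tau (-I) (starRingEnd ℂ z) = tau I z := by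
  simp [tau]

lemma tau_left_injective {z : ℂ} (hz : z.im ≠ 0) : Function.Injective (tau · z) := by
  intro A B h
  simpa [tau, hz] using h

lemma eq_or_eq_conj_of_tau_eq {A I : 𝕆} (hA : A ∈ sph) (hI : I ∈ sph) {u w : ℂ}
    (h : tau A u = tau I w) : u = w ∨ u = starRingEnd ℂ w := by
  have hre : u.re = w.re := by simpa [re_tau hA.2, re_tau hI.2] using congrArg re h
  have him : |u.im| = |w.im| := by
    simpa [im_tau hA.2, im_tau hI.2, onorm_smul, hA.1, hI.1] using congrArg (onorm ∘ im) h
  rcases abs_eq_abs.mp him with him | him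
  · exact Or.inl (Complex.ext hre him)
  · exact Or.inr (Complex.ext hre (by simpa using him))

lemma exists_tau_eq_of_tau_eq {A B I : 𝕆} (hA : A ∈ sph) (hB : B ∈ sph) (hI : I ∈ sph)
    {u w : ℂ} (h : tau A u = tau I w) : ∃ J ∈ sph, tau J w = tau B u := by
  rcases eq_or_eq_conj_of_tau_eq hA hI h with rfl | rfl
  · exact ⟨B, hB, rfl⟩
  · exact ⟨-B, neg_mem_sph hB, by simpa using tau_neg_conj B (starRingEnd ℂ w)⟩

def imSubmodule : Submodule ℝ 𝕆 where
  carrier := {x | re x = 0}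
  add_mem' := by simp_all [re]
  zero_mem' := rfl
  smul_mem' := by simp_all [re]

lemma one_lt_rank_imSubmodule : 1 < Module.rank ℝ imSubmodule := by
  let u : imSubmodule := ⟨⟨⟨0, 1, 0, 0⟩, 0⟩, rfl⟩
  let v : imSubmodule := ⟨⟨0, 1⟩, rfl⟩
  have hli : LinearIndependent ℝ ![u, v] := by
    rw [LinearIndependent.pair_iff]
    intro s t hst
    have hs : s * 1 + t * 0 = 0 := congrArg (fun x : imSubmodule => (x : 𝕆).a.imI) hst
    have ht : s * 0 + t * 1 = 0 := congrArg (fun x : imSubmodule => (x : 𝕆).b.re) hst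
    constructor <;> linarith
  have h2 : (2 : Cardinal) ≤ Module.rank ℝ imSubmodule := by simpa using hli.cardinal_le_rank
  exact lt_of_lt_of_le (by norm_num) h2

/-- `sph` is the image of the punctured space of imaginary octonions under `v ↦ v / |v|`. -/
lemma isPathConnected_sph : IsPathConnected sph := by
  have hcont : ContinuousOn (fun v : imSubmodule => (onorm v)⁻¹ • (v : 𝕆)) {0}ᶜ := by
    have hval : Continuous ((↑) : imSubmodule → 𝕆) := continuous_subtype_val
    refine ContinuousOn.smul (f := fun v : imSubmodule => (onorm v)⁻¹) ?_ hval.continuousOn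
    refine (continuous_onorm.comp hval).continuousOn.inv₀ fun v hv => ?_
    exact mt onorm_eq_zero.mp (by simpa using hv)
  convert (isPathConnected_compl_singleton_of_one_lt_rank one_lt_rank_imSubmodule 0).image' hcont
  ext I
  constructor
  · intro hI
    refine ⟨⟨I, hI.2⟩, fun h => ?_, by simp [hI.1]⟩
    exact one_ne_zero (hI.1.symm.trans (onorm_eq_zero.mpr (congrArg Subtype.val h)))
  · rintro ⟨v, hv, rfl⟩
    have hv : onorm v ≠ 0 := mt onorm_eq_zero.mp (by simpa using hv)
    refine ⟨?_, by rw [re_smul, v.2, mul_zero]⟩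
    rw [onorm_smul, abs_inv, abs_of_nonneg (show 0 ≤ onorm (v : 𝕆) from Real.sqrt_nonneg _),
      inv_mul_cancel₀ hv]

variable {Ω : Set 𝕆} {x y : 𝕆} {w : ℂ} {I J : 𝕆}

/-- Coupled circular liftings in `Ω`, given by paths, with the representation of their endpoints
as `τ_I w` and `τ_J w` fixed. -/
structure CoupledLiftings (Ω : Set 𝕆) (w : ℂ) (I J : 𝕆) where
  {z₀ : ℂ}
  {K : 𝕆}
  γ : Path z₀ w
  Θ₁ : Path K I
  Θ₂ : Path K J
  Θ₁_mem : ∀ t, Θ₁ t ∈ sph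
  Θ₂_mem : ∀ t, Θ₂ t ∈ sph
  lift₁_mem : ∀ t, tau (Θ₁ t) (γ t) ∈ Ω
  lift₂_mem : ∀ t, tau (Θ₂ t) (γ t) ∈ Ω

namespace CoupledLiftings

lemma mem_sph_left (L : CoupledLiftings Ω w I J) : I ∈ sph := by
  simpa using L.Θ₁_mem 1

lemma mem_sph_right (L : CoupledLiftings Ω w I J) : J ∈ sph := by
  simpa using L.Θ₂_mem 1

lemma tau_mem_left (L : CoupledLiftings Ω w I J) : tau I w ∈ Ω := by
  simpa using L.lift₁_mem 1

lemma tau_mem_right (L : CoupledLiftings Ω w I J) : tau J w ∈ Ω := by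
  simpa using L.lift₂_mem 1

lemma cclConnected (L : CoupledLiftings Ω w I J) : CCLConnected Ω (tau I w) (tau J w) :=
  ⟨L.γ, L.Θ₁, L.Θ₂, ⟨L.γ.continuous, L.Θ₁.continuous, L.Θ₁_mem⟩,
    ⟨L.γ.continuous, L.Θ₂.continuous, L.Θ₂_mem⟩, by simp, L.lift₁_mem, L.lift₂_mem,
    by simp, by simp⟩

def ofSphPath (hI : I ∈ sph) (P : Path I J) (hP : ∀ t, P t ∈ sph)
    (hw : ∀ t, tau (P t) w ∈ Ω) : CoupledLiftings Ω w I J where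
  γ := Path.refl w
  Θ₁ := Path.refl I
  Θ₂ := P
  Θ₁_mem _ := hI
  Θ₂_mem := hP
  lift₁_mem _ := by simpa using hw 0
  lift₂_mem := hw

def conj (L : CoupledLiftings Ω w I J) : CoupledLiftings Ω (starRingEnd ℂ w) (-I) (-J) where
  γ := L.γ.map Complex.continuous_conj
  Θ₁ := L.Θ₁.map continuous_neg
  Θ₂ := L.Θ₂.map continuous_neg
  Θ₁_mem t := neg_mem_sph (L.Θ₁_mem t)
  Θ₂_mem t := neg_mem_sph (L.Θ₂_mem t)
  lift₁_mem t := by simpa [tau_neg_conj] using L.lift₁_mem t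
  lift₂_mem t := by simpa [tau_neg_conj] using L.lift₂_mem t

def trans (L : CoupledLiftings Ω w I J) {w' : ℂ} (σ : Path w w')
    (hσ : ∀ t, tau I (σ t) ∈ Ω ∧ tau J (σ t) ∈ Ω) : CoupledLiftings Ω w' I J where
  γ := L.γ.trans σ
  Θ₁ := L.Θ₁.trans (Path.refl I)
  Θ₂ := L.Θ₂.trans (Path.refl J)
  Θ₁_mem t := by
    rw [Path.trans_apply]; split_ifs; exacts [L.Θ₁_mem _, L.mem_sph_left]
  Θ₂_mem t := by
    rw [Path.trans_apply]; split_ifs; exacts [L.Θ₂_mem _, L.mem_sph_right]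
  lift₁_mem t := by
    rw [Path.trans_apply, Path.trans_apply]; split_ifs; exacts [L.lift₁_mem _, (hσ _).1]
  lift₂_mem t := by
    rw [Path.trans_apply, Path.trans_apply]; split_ifs; exacts [L.lift₂_mem _, (hσ _).2]

lemma eventually_nonempty (hΩ : IsOpen Ω) (L : CoupledLiftings Ω w I J) :
    ∀ᶠ w' in 𝓝 w, Nonempty (CoupledLiftings Ω w' I J) := by
  have hU : {u | tau I u ∈ Ω ∧ tau J u ∈ Ω} ∈ 𝓝 w :=
    ((hΩ.preimage (continuous_tau I)).inter (hΩ.preimage (continuous_tau J))).mem_nhds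
      ⟨L.tau_mem_left, L.tau_mem_right⟩
  filter_upwards [pathComponentIn_mem_nhds hU] with w' hw'
  exact ⟨L.trans hw'.somePath hw'.somePath_mem⟩

end CoupledLiftings

lemma nonempty_coupledLiftings_of_im_eq_zero (hw : w.im = 0) (hI : I ∈ sph) (hJ : J ∈ sph)
    (hΩ : tau I w ∈ Ω) : Nonempty (CoupledLiftings Ω w I J) :=
  have hP := isPathConnected_sph.joinedIn I hI J hJ
  ⟨.ofSphPath hI hP.somePath hP.somePath_mem fun _ => tau_eq_tau_of_im_eq_zero hw _ I ▸ hΩ⟩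

lemma cclConnected_tau_self (hI : I ∈ sph) (hΩ : tau I w ∈ Ω) :
    CCLConnected Ω (tau I w) (tau I w) :=
  (CoupledLiftings.ofSphPath hI (Path.refl I) (fun _ => hI) fun _ => hΩ).cclConnected

namespace CCLConnected

lemma exists_coupledLiftings (h : CCLConnected Ω x y) :
    ∃ u A B, Nonempty (CoupledLiftings Ω u A B) ∧ tau A u = x ∧ tau B u = y := by
  obtain ⟨γ, Θ₁, Θ₂, ⟨hγ, hΘ₁, hs₁⟩, ⟨-, hΘ₂, hs₂⟩, h0, m₁, m₂, rfl, rfl⟩ := h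
  let L : CoupledLiftings Ω (γ 1) (Θ₁ 1) (Θ₂ 1) :=
    { γ := ⟨⟨γ, hγ⟩, rfl, rfl⟩
      Θ₁ := ⟨⟨Θ₁, hΘ₁⟩, rfl, rfl⟩
      Θ₂ := ⟨⟨Θ₂, hΘ₂⟩, h0.symm, rfl⟩
      Θ₁_mem := hs₁
      Θ₂_mem := hs₂
      lift₁_mem := m₁
      lift₂_mem := m₂ }
  exact ⟨_, _, _, ⟨L⟩, rfl, rfl⟩

lemma mem_left (h : CCLConnected Ω x y) : x ∈ Ω := by
  obtain ⟨u, A, B, ⟨L⟩, rfl, -⟩ := h.exists_coupledLiftings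
  exact L.tau_mem_left

lemma mem_right (h : CCLConnected Ω x y) : y ∈ Ω := by
  obtain ⟨u, A, B, ⟨L⟩, -, rfl⟩ := h.exists_coupledLiftings
  exact L.tau_mem_right

lemma nonempty_coupledLiftings (h : CCLConnected Ω (tau I w) (tau J w)) (hw : w.im ≠ 0)
    (hI : I ∈ sph) : Nonempty (CoupledLiftings Ω w I J) := by
  obtain ⟨u, A, B, ⟨L⟩, hA, hB⟩ := h.exists_coupledLiftings
  rcases eq_or_eq_conj_of_tau_eq L.mem_sph_left hI hA with rfl | rfl
  · rw [← tau_left_injective hw hA, ← tau_left_injective hw hB]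
    exact ⟨L⟩
  · have hA' : -A = I := tau_left_injective hw (by simpa using (tau_neg_conj A _).trans hA)
    have hB' : -B = J := tau_left_injective hw (by simpa using (tau_neg_conj B _).trans hB)
    have L' := L.conj
    rw [Complex.conj_conj, hA', hB'] at L'
    exact ⟨L'⟩

lemma eventually_tau (hΩ : IsOpen Ω) (h : CCLConnected Ω (tau I w) (tau J w))
    (hI : I ∈ sph) (hJ : J ∈ sph) : ∀ᶠ w' in 𝓝 w, CCLConnected Ω (tau I w') (tau J w') := by
  obtain ⟨L⟩ : Nonempty (CoupledLiftings Ω w I J) := by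
    by_cases hw : w.im = 0
    · exact nonempty_coupledLiftings_of_im_eq_zero hw hI hJ h.mem_left
    · exact h.nonempty_coupledLiftings hw hI
  exact (L.eventually_nonempty hΩ).mono fun _ ⟨L'⟩ => L'.cclConnected

end CCLConnected

namespace CCLEquiv

lemma mem_iff (h : CCLEquiv Ω x y) : x ∈ Ω ↔ y ∈ Ω := by
  induction h with
  | rel _ _ h => exact ⟨fun _ => h.mem_right, fun _ => h.mem_left⟩
  | refl => rfl
  | symm _ _ _ ih => exact ih.symm
  | trans _ _ _ _ _ ih₁ ih₂ => exact ih₁.trans ih₂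

lemma exists_tau_eq_iff (h : CCLEquiv Ω x y) (w : ℂ) :
    (∃ I ∈ sph, tau I w = x) ↔ (∃ J ∈ sph, tau J w = y) := by
  induction h with
  | rel _ _ h =>
    obtain ⟨u, A, B, ⟨L⟩, rfl, rfl⟩ := h.exists_coupledLiftings
    have hA := L.mem_sph_left
    have hB := L.mem_sph_right
    exact ⟨fun ⟨I, hI, hIA⟩ => exists_tau_eq_of_tau_eq hA hB hI hIA.symm,
      fun ⟨J, hJ, hJB⟩ => exists_tau_eq_of_tau_eq hB hA hJ hJB.symm⟩
  | refl => rfl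
  | symm _ _ _ ih => exact ih.symm
  | trans _ _ _ _ _ ih₁ ih₂ => exact ih₁.trans ih₂

lemma eventually_tau (hΩ : IsOpen Ω) (h : CCLEquiv Ω x y) (hx : x ∈ Ω) {I J : 𝕆} {w : ℂ}
    (hI : I ∈ sph) (hJ : J ∈ sph) (hIx : tau I w = x) (hJy : tau J w = y) :
    ∀ᶠ w' in 𝓝 w, CCLEquiv Ω (tau I w') (tau J w') := by
  induction h generalizing I J with
  | rel x y h =>
    subst hIx hJy
    exact (h.eventually_tau hΩ hI hJ).mono fun _ => .rel _ _
  | refl x =>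
    subst hIx
    have h : CCLConnected Ω (tau I w) (tau J w) := by
      rw [hJy]; exact cclConnected_tau_self hI hx
    exact (h.eventually_tau hΩ hI hJ).mono fun _ => .rel _ _
  | symm x y h ih =>
    exact (ih ((mem_iff h).mpr hx) hJ hI hJy hIx).mono fun _ => .symm _ _
  | trans x y z hxy _ ih₁ ih₂ =>
    obtain ⟨K, hK, hKy⟩ := (exists_tau_eq_iff hxy w).mp ⟨I, hI, hIx⟩
    filter_upwards [ih₁ hx hI hK hIx hKy, ih₂ ((mem_iff hxy).mp hx) hK hJ hKy hJy] with w' h₁ h₂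
    exact .trans _ _ _ h₁ h₂

end CCLEquiv

end Octonion

open Octonion in
theorem stmt17_general (Ω : Set 𝕆) (hΩo : IsOpen Ω)
    (z : ℂ) (I₁ I₂ : 𝕆) (hI₁ : I₁ ∈ sph) (hI₂ : I₂ ∈ sph)
    (h₁ : tau I₁ z ∈ Ω)
    (h : CCLEquiv Ω (tau I₁ z) (tau I₂ z)) :
    ∃ δ > 0, ∀ z' : ℂ, dist z' z < δ → CCLEquiv Ω (tau I₁ z') (tau I₂ z') :=
  Metric.eventually_nhds_iff.mp (h.eventually_tau hΩo h₁ hI₁ hI₂ rfl rfl)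

open Octonion in
/-- local infectivity of CCL equivalence: if `(z,I₁) ≃ (z,I₂)` in `Ω̂`, then
`(z',I₁) ≃ (z',I₂)` for all `z'` sufficiently close to `z`. -/
theorem stmt17 (Ω : Set 𝕆) (hΩo : IsOpen Ω) (hΩc : IsConnected Ω)
    (z : ℂ) (I₁ I₂ : 𝕆) (hI₁ : I₁ ∈ sph) (hI₂ : I₂ ∈ sph)
    (h₁ : tau I₁ z ∈ Ω) (h₂ : tau I₂ z ∈ Ω)
    (h : CCLEquiv Ω (tau I₁ z) (tau I₂ z)) :
    ∃ δ > 0, ∀ z' : ℂ, dist z' z < δ → CCLEquiv Ω (tau I₁ z') (tau I₂ z') :=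
  stmt17_general Ω hΩo z I₁ I₂ hI₁ hI₂ h₁ h
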